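/- If n is prime, then any k×k submatrix of the n×n Fourier matrix F_n = (e^{2πi rs/n})_{0≤r,s≤n-1}, formed by choosing any k distinct rows and any k distinct columns, is invertible. -/
import Mathlib


open Complex

noncomputable section

/-- The `n × n` Fourier matrix `F_n = (e^{2πi rs/n})_{0 ≤ r,s ≤ n-1}`. -/
def Fmat (n : ℕ) : Matrix (Fin n) (Fin n) ℂ :=
  Matrix.of fun r s : Fin n =>
    Complex.exp (2 * Real.pi * Complex.I * (r : ℕ) * (s : ℕ) / n)

namespace ChebAux

open Polynomial Finset Equiv


/-- The sum of a finset of naturals is at least `0 + 1 + ... + (card - 1)`. -/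
lemma sum_card_le (S : Finset ℕ) : ∑ i ∈ Finset.range S.card, i ≤ ∑ x ∈ S, x := by
  induction S using Finset.strongInduction with
  | _ S ih =>
    rcases S.eq_empty_or_nonempty with rfl | hS
    · simp
    · have hmS : S.max' hS ∈ S := S.max'_mem hS
      have hsub : S ⊆ Finset.range (S.max' hS + 1) := fun x hx =>
        Finset.mem_range.2 (Nat.lt_succ_of_le (S.le_max' x hx))
      have hcard : S.card ≤ S.max' hS + 1 := by
        simpa using Finset.card_le_card hsub
      have h1 : 1 ≤ S.card := Finset.card_pos.2 hS
      have hthis := ih (S.erase (S.max' hS)) (Finset.erase_ssubset hmS)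
      have hc : (S.erase (S.max' hS)).card = S.card - 1 := Finset.card_erase_of_mem hmS
      have hsplit : ∑ x ∈ S.erase (S.max' hS), x + S.max' hS = ∑ x ∈ S, x := by
        simpa using Finset.sum_erase_add S (fun x => x) hmS
      have e1 : S.card - 1 + 1 = S.card := by omega
      rw [hc] at hthis
      rw [← hsplit, ← e1, Finset.sum_range_succ]
      exact Nat.add_le_add hthis (by omega)

lemma le_sum_of_injective {k : ℕ} {c : Fin k → ℕ} (hc : Function.Injective c) :
    (∑ i : Fin k, (i : ℕ)) ≤ ∑ i, c i := by
  classical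
  have himg : (Finset.univ.image c).card = k := by
    rw [Finset.card_image_of_injective _ hc, Finset.card_univ, Fintype.card_fin]
  have hsum : ∑ x ∈ Finset.univ.image c, x = ∑ i, c i :=
    Finset.sum_image (fun x _ y _ h => hc h)
  have h := sum_card_le (Finset.univ.image c)
  rw [himg, hsum] at h
  calc (∑ i : Fin k, (i : ℕ)) = ∑ i ∈ Finset.range k, i := Fin.sum_univ_eq_sum_range (fun i => i) k
    _ ≤ ∑ i, c i := h

lemma lt_of_injective_sum_eq {k : ℕ} {c : Fin k → ℕ} (hc : Function.Injective c)
    (hsum : ∑ i, c i = ∑ i : Fin k, (i : ℕ)) : ∀ i, c i < k := by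
  classical
  by_contra h
  push_neg at h
  obtain ⟨i0, hi0⟩ := h
  have hk : 0 < k := i0.pos
  set T := Finset.univ.image c with hT
  have hcardT : T.card = k := by
    rw [hT, Finset.card_image_of_injective _ hc, Finset.card_univ, Fintype.card_fin]
  have hsumT : ∑ x ∈ T, x = ∑ i : Fin k, (i : ℕ) := by
    rw [hT, Finset.sum_image (fun x _ y _ h => hc h)]; exact hsum
  have hmem : c i0 ∈ T := Finset.mem_image_of_mem c (Finset.mem_univ i0)
  have h1 : ∑ x ∈ T.erase (c i0), x + c i0 = ∑ x ∈ T, x := by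
    simpa using Finset.sum_erase_add T (fun x => x) hmem
  have h2 := sum_card_le (T.erase (c i0))
  rw [Finset.card_erase_of_mem hmem, hcardT] at h2
  have h3 : (∑ i : Fin k, (i : ℕ)) = ∑ i ∈ Finset.range k, i := Fin.sum_univ_eq_sum_range (fun i => i) k
  obtain ⟨k', rfl⟩ : ∃ k', k = k' + 1 := ⟨k - 1, by omega⟩
  have h4 : ∑ i ∈ Finset.range k', i + k' = ∑ i ∈ Finset.range (k' + 1), i :=
    (Finset.sum_range_succ _ _).symm
  simp only [Nat.add_sub_cancel] at h2
  rw [hsumT, h3] at h1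
  omega



variable {k : ℕ}

/-- `m0 k = 0 + 1 + ... + (k-1)`. -/
def m0 (k : ℕ) : ℕ := ∑ i : Fin k, (i : ℕ)

/-- The alternating power sum. -/
def Tsum (R S : Fin k → ℤ) (e : ℕ) : ℤ :=
  ∑ σ : Equiv.Perm (Fin k), (Equiv.Perm.sign σ : ℤ) * (∑ i, R (σ i) * S i) ^ e

lemma Tsum_expand (R S : Fin k → ℤ) (e : ℕ) :
    Tsum R S e = ∑ c ∈ Finset.piAntidiag (Finset.univ : Finset (Fin k)) e,
      (Nat.multinomial Finset.univ c : ℤ) * ((∏ i, S i ^ c i) *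
        (Matrix.of fun a b : Fin k => R a ^ c b).det) := by
  classical
  unfold Tsum
  have h1 : ∀ σ : Equiv.Perm (Fin k), (∑ i, R (σ i) * S i) ^ e
      = ∑ c ∈ Finset.piAntidiag Finset.univ e,
          (Nat.multinomial Finset.univ c : ℤ) * ∏ i, (R (σ i) * S i) ^ c i :=
    fun σ => Finset.sum_pow_eq_sum_piAntidiag Finset.univ _ e
  simp_rw [h1, Finset.mul_sum]
  rw [Finset.sum_comm]
  refine Finset.sum_congr rfl fun c _ => ?_
  rw [Matrix.det_apply', Finset.mul_sum, Finset.mul_sum]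
  refine Finset.sum_congr rfl fun σ _ => ?_
  simp only [Matrix.of_apply, mul_pow, Finset.prod_mul_distrib, Int.cast_id]
  ring

lemma Tsum_eq_zero (R S : Fin k → ℤ) (e : ℕ) (he : e < m0 k) : Tsum R S e = 0 := by
  classical
  rw [Tsum_expand]
  refine Finset.sum_eq_zero fun c hc => ?_
  rw [Finset.mem_piAntidiag] at hc
  have hninj : ¬ Function.Injective c := by
    intro hinj
    have h := le_sum_of_injective hinj
    rw [hc.1] at h
    simp only [m0] at he
    omega
  obtain ⟨a, b, hab, hne⟩ := Function.not_injective_iff.1 hninj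
  have hdet : (Matrix.of fun a b : Fin k => R a ^ c b).det = 0 :=
    Matrix.det_zero_of_column_eq hne fun x => by simp [hab]
  rw [hdet, mul_zero, mul_zero]

lemma Tsum_m0 (R S : Fin k → ℤ) :
    Tsum R S (m0 k) = (Nat.multinomial Finset.univ (fun i : Fin k => (i : ℕ)) : ℤ) *
      ((Matrix.vandermonde R).det * (Matrix.vandermonde S).det) := by
  classical
  rw [Tsum_expand]
  rw [← Finset.sum_filter_of_ne (p := fun c => Function.Injective c)
    (fun c hc hne => by
      by_contra hninj
      obtain ⟨a, b, hab, hne'⟩ := Function.not_injective_iff.1 hninj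
      have hdet : (Matrix.of fun a b : Fin k => R a ^ c b).det = 0 :=
        Matrix.det_zero_of_column_eq hne' fun x => by simp [hab]
      exact hne (by rw [hdet, mul_zero, mul_zero]))]
  have hset : (Finset.piAntidiag (Finset.univ : Finset (Fin k)) (m0 k)).filter
      (fun c => Function.Injective c)
      = Finset.image (fun w : Equiv.Perm (Fin k) => (fun i => ((w i : ℕ)))) Finset.univ := by
    ext c
    simp only [Finset.mem_filter, Finset.mem_piAntidiag, Finset.mem_image, Finset.mem_univ,
      true_and]
    constructor
    · rintro ⟨⟨hsum, -⟩, hinj⟩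
      have hlt : ∀ i, c i < k := lt_of_injective_sum_eq hinj hsum
      have hginj : Function.Injective (fun i => (⟨c i, hlt i⟩ : Fin k)) := by
        intro a b hab
        exact hinj (by simpa [Fin.ext_iff] using hab)
      refine ⟨Equiv.ofBijective _ ((Finite.injective_iff_bijective).1 hginj), ?_⟩
      funext i
      rfl
    · rintro ⟨w, rfl⟩
      refine ⟨⟨Equiv.sum_comp w (fun j : Fin k => (j : ℕ)), fun i _ => trivial⟩, ?_⟩
      exact Fin.val_injective.comp w.injective
  rw [hset, Finset.sum_image (fun w₁ _ w₂ _ h => Equiv.ext fun i =>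
    Fin.val_injective (congrFun h i))]
  have hmult : ∀ w : Equiv.Perm (Fin k),
      Nat.multinomial Finset.univ (fun i => ((w i : ℕ)))
        = Nat.multinomial Finset.univ (fun i : Fin k => (i : ℕ)) := by
    intro w
    have h1 : ∑ i : Fin k, ((w i : ℕ)) = ∑ i : Fin k, (i : ℕ) :=
      Equiv.sum_comp w (fun j : Fin k => (j : ℕ))
    have h2 : ∏ i : Fin k, Nat.factorial ((w i : ℕ)) = ∏ i : Fin k, Nat.factorial (i : ℕ) :=
      Equiv.prod_comp w (fun j : Fin k => Nat.factorial (j : ℕ))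
    unfold Nat.multinomial
    simp only [h1, h2]
  have hdet : ∀ w : Equiv.Perm (Fin k),
      (Matrix.of fun a b : Fin k => R a ^ ((w b : ℕ))).det
        = (Equiv.Perm.sign w : ℤ) * (Matrix.vandermonde R).det := by
    intro w
    have h : (Matrix.of fun a b : Fin k => R a ^ ((w b : ℕ)))
        = (Matrix.vandermonde R).submatrix id w := by
      ext a b
      simp [Matrix.vandermonde, Matrix.submatrix_apply]
    rw [h, Matrix.det_permute']
    norm_cast
  have hS : (Matrix.vandermonde S).det
      = ∑ w : Equiv.Perm (Fin k), (Equiv.Perm.sign w : ℤ) * ∏ i, S i ^ ((w i : ℕ)) := by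
    rw [← Matrix.det_transpose (Matrix.vandermonde S), Matrix.det_apply']
    refine Finset.sum_congr rfl fun w _ => ?_
    simp [Matrix.transpose_apply, Matrix.vandermonde]
  have step : ∀ w : Equiv.Perm (Fin k),
      ((Nat.multinomial Finset.univ (fun i => ((w i : ℕ)))) : ℤ) *
        ((∏ i, S i ^ ((w i : ℕ))) * (Matrix.of fun a b : Fin k => R a ^ ((w b : ℕ))).det)
      = ((Nat.multinomial Finset.univ (fun i : Fin k => (i : ℕ))) : ℤ) *
          (Matrix.vandermonde R).det *
          ((Equiv.Perm.sign w : ℤ) * ∏ i, S i ^ ((w i : ℕ))) := by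
    intro w
    rw [hmult w, hdet w]
    ring
  rw [Finset.sum_congr rfl (fun w _ => step w), ← Finset.mul_sum, ← hS]
  ring



variable {k : ℕ}

/-- The determinant polynomial `det((X+1)^{r_i s_j})`. -/
def Ppoly (k : ℕ) (r s : Fin k → ℕ) : Polynomial ℤ :=
  (Matrix.of fun i j : Fin k => ((X : Polynomial ℤ) + 1) ^ (r i * s j)).det

lemma Ppoly_coeff (r s : Fin k → ℕ) (m : ℕ) :
    (Ppoly k r s).coeff m = ∑ σ : Equiv.Perm (Fin k),
      (Equiv.Perm.sign σ : ℤ) * ((∑ i, r (σ i) * s i).choose m : ℤ) := by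
  unfold Ppoly
  rw [Matrix.det_apply', Polynomial.finset_sum_coeff]
  refine Finset.sum_congr rfl fun σ _ => ?_
  have h : ∏ i, (Matrix.of fun i j : Fin k => ((X : Polynomial ℤ) + 1) ^ (r i * s j)) (σ i) i
      = ((X : Polynomial ℤ) + 1) ^ (∑ i, r (σ i) * s i) := by
    simp only [Matrix.of_apply]
    rw [Finset.prod_pow_eq_pow_sum]
  rw [h, ← Polynomial.C_eq_intCast, Polynomial.coeff_C_mul, Polynomial.coeff_X_add_one_pow]
  norm_cast

lemma factorial_mul_choose_cast (m N : ℕ) :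
    (Nat.factorial m : ℤ) * (N.choose m : ℤ) = ∏ t ∈ Finset.range m, ((N : ℤ) - t) := by
  rcases le_or_gt m N with h | h
  · have h2 : ((N.descFactorial m : ℕ) : ℤ) = ∏ t ∈ Finset.range m, ((N : ℤ) - t) := by
      rw [Nat.descFactorial_eq_prod_range, Nat.cast_prod]
      refine Finset.prod_congr rfl fun t ht => ?_
      rw [Nat.cast_sub ((lt_of_lt_of_le (Finset.mem_range.1 ht) h)).le]
    rw [← h2, Nat.descFactorial_eq_factorial_mul_choose]
    push_cast
    ring
  · rw [Nat.choose_eq_zero_of_lt h,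
      Finset.prod_eq_zero (Finset.mem_range.2 h) (by simp)]
    simp

lemma q_monic (m : ℕ) : (∏ t ∈ Finset.range m, ((X : Polynomial ℤ) - Polynomial.C (t : ℤ))).Monic :=
  Polynomial.monic_prod_of_monic _ _ fun t _ => Polynomial.monic_X_sub_C _

lemma q_natDegree (m : ℕ) :
    (∏ t ∈ Finset.range m, ((X : Polynomial ℤ) - Polynomial.C (t : ℤ))).natDegree = m := by
  have h := Polynomial.natDegree_prod (Finset.range m)
    (fun t : ℕ => (X : Polynomial ℤ) - Polynomial.C (t : ℤ))
    (fun t _ => Polynomial.X_sub_C_ne_zero _)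
  rw [h]
  simp only [Polynomial.natDegree_X_sub_C]
  simp

lemma factorial_mul_Ppoly_coeff (r s : Fin k → ℕ) (m : ℕ) :
    (Nat.factorial m : ℤ) * (Ppoly k r s).coeff m
      = ∑ e ∈ Finset.range (m + 1),
          (∏ t ∈ Finset.range m, ((X : Polynomial ℤ) - Polynomial.C (t : ℤ))).coeff e *
            Tsum (fun i => ((r i : ℕ) : ℤ)) (fun i => ((s i : ℕ) : ℤ)) e := by
  classical
  set q : Polynomial ℤ := ∏ t ∈ Finset.range m, (X - Polynomial.C (t : ℤ)) with hq
  have heval : ∀ N : ℕ, (Nat.factorial m : ℤ) * (N.choose m : ℤ) = q.eval (N : ℤ) := by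
    intro N
    rw [factorial_mul_choose_cast, hq, Polynomial.eval_prod]
    simp
  have hevalsum : ∀ x : ℤ, q.eval x = ∑ e ∈ Finset.range (m + 1), q.coeff e * x ^ e := by
    intro x
    exact Polynomial.eval_eq_sum_range' (by rw [q_natDegree m]; omega) x
  rw [Ppoly_coeff, Finset.mul_sum]
  have key : ∀ σ : Equiv.Perm (Fin k),
      (Nat.factorial m : ℤ) *
        ((Equiv.Perm.sign σ : ℤ) * ((∑ i, r (σ i) * s i).choose m : ℤ))
      = ∑ e ∈ Finset.range (m + 1), q.coeff e *
          ((Equiv.Perm.sign σ : ℤ) * (∑ i, ((r (σ i) : ℤ)) * ((s i : ℤ))) ^ e) := by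
    intro σ
    have hcast : ((∑ i, r (σ i) * s i : ℕ) : ℤ) = ∑ i, ((r (σ i) : ℤ)) * ((s i : ℤ)) := by
      push_cast
      ring
    calc (Nat.factorial m : ℤ) *
          ((Equiv.Perm.sign σ : ℤ) * ((∑ i, r (σ i) * s i).choose m : ℤ))
        = (Equiv.Perm.sign σ : ℤ) *
            ((Nat.factorial m : ℤ) * ((∑ i, r (σ i) * s i).choose m : ℤ)) := by ring
      _ = (Equiv.Perm.sign σ : ℤ) * q.eval (((∑ i, r (σ i) * s i : ℕ)) : ℤ) := by rw [heval]
      _ = ∑ e ∈ Finset.range (m + 1), q.coeff e *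
            ((Equiv.Perm.sign σ : ℤ) * (∑ i, ((r (σ i) : ℤ)) * ((s i : ℤ))) ^ e) := by
          rw [hevalsum, hcast, Finset.mul_sum]
          refine Finset.sum_congr rfl fun e _ => by ring
  rw [Finset.sum_congr rfl fun σ _ => key σ, Finset.sum_comm]
  unfold Tsum
  refine Finset.sum_congr rfl fun e _ => ?_
  rw [Finset.mul_sum]

lemma Ppoly_coeff_eq_zero (r s : Fin k → ℕ) (m : ℕ) (hm : m < m0 k) :
    (Ppoly k r s).coeff m = 0 := by
  have h := factorial_mul_Ppoly_coeff (k := k) r s m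
  rw [Finset.sum_eq_zero (fun e he => by
    have he' : e < m0 k := by
      have := Finset.mem_range.1 he
      omega
    rw [Tsum_eq_zero _ _ e he', mul_zero])] at h
  have hfac : (Nat.factorial m : ℤ) ≠ 0 := by exact_mod_cast Nat.factorial_ne_zero m
  exact (mul_eq_zero.1 h).resolve_left hfac

lemma Ppoly_coeff_m0 (r s : Fin k → ℕ) :
    ((m0 k).factorial : ℤ) * (Ppoly k r s).coeff (m0 k)
      = (Nat.multinomial Finset.univ (fun i : Fin k => (i : ℕ)) : ℤ) *
        ((Matrix.vandermonde fun i => ((r i : ℕ) : ℤ)).det *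
          (Matrix.vandermonde fun i => ((s i : ℕ) : ℤ)).det) := by
  rw [factorial_mul_Ppoly_coeff, Finset.sum_range_succ]
  rw [Finset.sum_eq_zero (fun e he => by
    rw [Tsum_eq_zero _ _ e (Finset.mem_range.1 he), mul_zero])]
  rw [zero_add]
  have h1 : (∏ t ∈ Finset.range (m0 k),
      ((X : Polynomial ℤ) - Polynomial.C (t : ℤ))).coeff (m0 k) = 1 := by
    have h := (q_monic (m0 k)).coeff_natDegree
    rwa [q_natDegree] at h
  rw [h1, one_mul, Tsum_m0]

lemma not_dvd_vandermonde (p : ℕ) (hp : p.Prime) (v : Fin k → ℕ)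
    (hv : Function.Injective v) (hlt : ∀ i, v i < p) :
    ¬ (p : ℤ) ∣ (Matrix.vandermonde fun i => ((v i : ℕ) : ℤ)).det := by
  intro hdvd
  have hpz : Prime (p : ℤ) := Nat.prime_iff_prime_int.1 hp
  rw [Matrix.det_vandermonde] at hdvd
  obtain ⟨i, -, hi⟩ := (hpz.dvd_finset_prod_iff _).1 hdvd
  obtain ⟨j, hj, hij⟩ := (hpz.dvd_finset_prod_iff _).1 hi
  have hvne : ((v j : ℕ) : ℤ) ≠ ((v i : ℕ) : ℤ) := by
    intro hEq
    exact (Finset.mem_Ioi.1 hj).ne' (hv (by exact_mod_cast hEq))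
  have h0 : ((v j : ℕ) : ℤ) - ((v i : ℕ) : ℤ) ≠ 0 := sub_ne_zero.2 hvne
  have hle := Int.le_of_dvd (abs_pos.2 h0) ((dvd_abs _ _).2 hij)
  have h1 : ((v i : ℕ) : ℤ) < p := by exact_mod_cast hlt i
  have h2 : ((v j : ℕ) : ℤ) < p := by exact_mod_cast hlt j
  have h3 : (0 : ℤ) ≤ ((v i : ℕ) : ℤ) := Int.natCast_nonneg _
  have h4 : (0 : ℤ) ≤ ((v j : ℕ) : ℤ) := Int.natCast_nonneg _
  have habs : |((v j : ℕ) : ℤ) - ((v i : ℕ) : ℤ)| < p :=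
    abs_sub_lt_iff.2 ⟨by linarith, by linarith⟩
  linarith


end ChebAux

/-- Chebotarëv's theorem: if `n` is prime, any `k × k` submatrix of the Fourier matrix `F_n`
formed by choosing `k` distinct rows and `k` distinct columns is invertible. -/
theorem fourier_submatrix_prime_invertible (n k : ℕ) (hn : n.Prime)
    (ρ σ : Fin k → Fin n) (hρ : Function.Injective ρ) (hσ : Function.Injective σ) :
    ((Fmat n).submatrix ρ σ).det ≠ 0 := by
  classical
  haveI : Fact n.Prime := ⟨hn⟩
  intro hdet
  set r : Fin k → ℕ := fun i => ((ρ i : ℕ)) with hrdef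
  set s : Fin k → ℕ := fun i => ((σ i : ℕ)) with hsdef
  have hr : Function.Injective r := fun a b h => hρ (Fin.val_injective h)
  have hs : Function.Injective s := fun a b h => hσ (Fin.val_injective h)
  have hn0 : n ≠ 0 := hn.ne_zero
  set ζ : ℂ := Complex.exp (2 * Real.pi * Complex.I / n) with hζdef
  have hprim : IsPrimitiveRoot ζ n := Complex.isPrimitiveRoot_exp n hn0
  -- the submatrix determinant is the value of `Ppoly` composed with `X - 1` at `ζ`
  have hmap : (Polynomial.aeval ζ) ((ChebAux.Ppoly k r s).comp (Polynomial.X - 1))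
      = ((Fmat n).submatrix ρ σ).det := by
    rw [Polynomial.aeval_comp]
    have hz : (Polynomial.aeval ζ) (Polynomial.X - 1 : Polynomial ℤ) = ζ - 1 := by simp
    rw [hz]
    unfold ChebAux.Ppoly
    rw [AlgHom.map_det]
    congr 1
    ext i j
    simp only [AlgHom.mapMatrix_apply, Matrix.map_apply, Matrix.of_apply, map_pow, map_add,
      Polynomial.aeval_X, map_one, Matrix.submatrix_apply]
    rw [sub_add_cancel]
    show _ = Complex.exp (2 * Real.pi * Complex.I * ((ρ i : ℕ) : ℂ) * ((σ j : ℕ) : ℂ) / n)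
    rw [hζdef, ← Complex.exp_nat_mul]
    congr 1
    push_cast
    ring
  have hroot : (Polynomial.aeval ζ) ((ChebAux.Ppoly k r s).comp (Polynomial.X - 1)) = 0 := by
    rw [hmap, hdet]
  have hint : IsIntegral ℤ ζ := hprim.isIntegral hn.pos
  have hdvd : minpoly ℤ ζ ∣ (ChebAux.Ppoly k r s).comp (Polynomial.X - 1) :=
    minpoly.isIntegrallyClosed_dvd hint hroot
  rw [← Polynomial.cyclotomic_eq_minpoly hprim hn.pos] at hdvd
  obtain ⟨Q, hQ⟩ := hdvd
  have hcomp : ChebAux.Ppoly k r s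
      = ((Polynomial.cyclotomic n ℤ).comp (Polynomial.X + 1)) * (Q.comp (Polynomial.X + 1)) := by
    have h1 := congrArg (fun q : Polynomial ℤ => q.comp (Polynomial.X + 1)) hQ
    simp only [Polynomial.mul_comp] at h1
    rw [Polynomial.comp_assoc, Polynomial.sub_comp, Polynomial.X_comp, Polynomial.one_comp] at h1
    rw [show (Polynomial.X + 1 - 1 : Polynomial ℤ) = Polynomial.X by ring,
      Polynomial.comp_X] at h1
    exact h1
  set ψ : Polynomial ℤ := (Polynomial.cyclotomic n ℤ).comp (Polynomial.X + 1) with hψdef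
  have hψ0 : ψ.coeff 0 = (n : ℤ) := by
    rw [hψdef, Polynomial.coeff_zero_eq_eval_zero, Polynomial.eval_comp]
    simp only [Polynomial.eval_add, Polynomial.eval_X, Polynomial.eval_one, zero_add]
    exact Polynomial.eval_one_cyclotomic_prime
  have hlow : Polynomial.X ^ (ChebAux.m0 k) ∣ ChebAux.Ppoly k r s :=
    Polynomial.X_pow_dvd_iff.2 fun d hd => ChebAux.Ppoly_coeff_eq_zero r s d hd
  have hXnd : ¬ (Polynomial.X : Polynomial ℤ) ∣ ψ := by
    rw [Polynomial.X_dvd_iff, hψ0]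
    exact_mod_cast hn0
  have hXQ : Polynomial.X ^ (ChebAux.m0 k) ∣ Q.comp (Polynomial.X + 1) := by
    refine Polynomial.prime_X.pow_dvd_of_dvd_mul_left _ hXnd ?_
    rw [← hcomp]
    exact hlow
  obtain ⟨Q1, hQ1⟩ := hXQ
  have hPfact : ChebAux.Ppoly k r s = Polynomial.X ^ (ChebAux.m0 k) * (ψ * Q1) := by
    rw [hcomp, hQ1]
    ring
  have hcoeffP : (ChebAux.Ppoly k r s).coeff (ChebAux.m0 k) = (n : ℤ) * Q1.coeff 0 := by
    rw [hPfact]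
    have h := Polynomial.coeff_X_pow_mul (ψ * Q1) (ChebAux.m0 k) 0
    rw [zero_add] at h
    rw [h, Polynomial.mul_coeff_zero, hψ0]
  have hdvdn : (n : ℤ) ∣ (ChebAux.Ppoly k r s).coeff (ChebAux.m0 k) :=
    ⟨Q1.coeff 0, hcoeffP⟩
  -- but the `m0`-th coefficient is not divisible by `n`
  have h2 := ChebAux.Ppoly_coeff_m0 (k := k) r s
  have hms := Nat.multinomial_spec (Finset.univ : Finset (Fin k)) (fun i : Fin k => (i : ℕ))
  have hcast : (∏ i : Fin k, (Nat.factorial (i : ℕ) : ℤ)) *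
      (Nat.multinomial Finset.univ (fun i : Fin k => (i : ℕ)) : ℤ)
      = ((ChebAux.m0 k).factorial : ℤ) := by
    rw [ChebAux.m0]
    exact_mod_cast hms
  have hfne : (((ChebAux.m0 k).factorial : ℕ) : ℤ) ≠ 0 := by
    exact_mod_cast Nat.factorial_ne_zero _
  have hkey : (∏ i : Fin k, (Nat.factorial (i : ℕ) : ℤ)) *
      (ChebAux.Ppoly k r s).coeff (ChebAux.m0 k)
      = (Matrix.vandermonde fun i => ((r i : ℕ) : ℤ)).det *
        (Matrix.vandermonde fun i => ((s i : ℕ) : ℤ)).det := by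
    apply mul_left_cancel₀ hfne
    calc (((ChebAux.m0 k).factorial : ℕ) : ℤ) *
          ((∏ i : Fin k, (Nat.factorial (i : ℕ) : ℤ)) *
            (ChebAux.Ppoly k r s).coeff (ChebAux.m0 k))
        = (∏ i : Fin k, (Nat.factorial (i : ℕ) : ℤ)) *
            ((((ChebAux.m0 k).factorial : ℕ) : ℤ) *
              (ChebAux.Ppoly k r s).coeff (ChebAux.m0 k)) := by ring
      _ = (∏ i : Fin k, (Nat.factorial (i : ℕ) : ℤ)) *
            ((Nat.multinomial Finset.univ (fun i : Fin k => (i : ℕ)) : ℤ) *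
              ((Matrix.vandermonde fun i => ((r i : ℕ) : ℤ)).det *
                (Matrix.vandermonde fun i => ((s i : ℕ) : ℤ)).det)) := by rw [h2]
      _ = ((∏ i : Fin k, (Nat.factorial (i : ℕ) : ℤ)) *
            (Nat.multinomial Finset.univ (fun i : Fin k => (i : ℕ)) : ℤ)) *
              ((Matrix.vandermonde fun i => ((r i : ℕ) : ℤ)).det *
                (Matrix.vandermonde fun i => ((s i : ℕ) : ℤ)).det) := by ring
      _ = (((ChebAux.m0 k).factorial : ℕ) : ℤ) *
            ((Matrix.vandermonde fun i => ((r i : ℕ) : ℤ)).det *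
              (Matrix.vandermonde fun i => ((s i : ℕ) : ℤ)).det) := by rw [hcast]
  have hrlt : ∀ i, r i < n := fun i => (ρ i).is_lt
  have hslt : ∀ i, s i < n := fun i => (σ i).is_lt
  have hnd : ¬ (n : ℤ) ∣ ((Matrix.vandermonde fun i => ((r i : ℕ) : ℤ)).det *
      (Matrix.vandermonde fun i => ((s i : ℕ) : ℤ)).det) := by
    intro h
    rcases (Nat.prime_iff_prime_int.1 hn).dvd_mul.1 h with h | h
    · exact ChebAux.not_dvd_vandermonde n hn r hr hrlt h
    · exact ChebAux.not_dvd_vandermonde n hn s hs hslt h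
  apply hnd
  rw [← hkey]
  exact Dvd.dvd.mul_left hdvdn _
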